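/- Let P be a finite poset and R a commutative unital ring. Set Z^3_1(P,R) = J^3_1(P,R) and Z^3_2(P,R) = [Z^3_1(P,R), Z^3_1(P,R)]. Then Z^3_2(P,R) equals Z^3_1(P,R)·Z^3_1(P,R) (the R-span of products fg with f,g ∈ Z^3_1(P,R)), and equals the internal direct sum of the R-span of {e_{xxy} + e_{xyy} : x < y, l(x,y) = 1} and J^3_2(P,R). In particular, Z^3_2(P,R) is closed under the multiplication of I^3(P,R). -/

import Mathlib

/-!
Write `e_{xyz}` for the basis functions; `l(x,z) = 1` means `x ⋖ z`, and `l(x,z) ≥ 2` means that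
some `w` has `x < w < z`.

For `x ≤ u ≤ v ≤ z` with `x < v`, `u < z` and `x ≠ z`, the commutator of `e_{xuv}, e_{uvz} ∈ J^3_1`
is `∑_{u ≤ b ≤ v} e_{xbz}`. The choices `(u,v) = (x,z)` for `x ⋖ z`, `u = v = y` for `x < y < z`,
and `(u,v) = (x,w)` or `(w,z)` for `x < w < z` put `e_{xxz} + e_{xzz}` and every `e_{xyz}` with
`l(x,z) ≥ 2` into `[J^3_1, J^3_1]`; in the last case the terms with `x < b < z` are covered by the
second choice.

Conversely, a product `fg` of elements of `J^3_1` vanishes on the diagonal and, for `x ⋖ z`, takes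
the same value `f(x,x,z) g(x,z,z)` at `(x,x,z)` and at `(x,z,z)`, the only flags from `x` to `z`.
Such a function is `∑_{x ⋖ z} f(x,x,z) (e_{xxz} + e_{xzz})` plus an element of `J^3_2`, and these
two summands have disjoint supports. Hence
`[J^3_1, J^3_1] ⊆ J^3_1 J^3_1 ⊆ span{e_{xxz} + e_{xzz}} ⊕ J^3_2 ⊆ [J^3_1, J^3_1]`.
-/

/-- 3-flags (chains x ≤ y ≤ z) in a poset `P`. -/
abbrev Flag3 (P : Type*) [PartialOrder P] : Type _ :=
  {t : P × P × P // t.1 ≤ t.2.1 ∧ t.2.1 ≤ t.2.2}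

/-- `ell x y` is the length of the interval `[x,y]`, i.e. the maximal cardinality of a
chain in `[x,y]` minus one. -/
noncomputable def ell {P : Type*} [PartialOrder P] (x y : P) : ℕ∞ :=
  (Set.Icc x y).chainHeight (· < ·) - 1

section PreDefs

variable (P R : Type*) [PartialOrder P] [LocallyFiniteOrder P] [CommRing R]

/-- The multiplication of the partial flag incidence algebra `I^3(P,R)`. -/
def mul3 : (Flag3 P → R) → (Flag3 P → R) → (Flag3 P → R) := fun f g t =>
  ∑ p ∈ ((Finset.Icc t.1.1 t.1.2.1) ×ˢ (Finset.Icc t.1.2.1 t.1.2.2)).attach,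
    f ⟨(t.1.1, p.1.1, p.1.2), by
        obtain ⟨h1, h2⟩ := Finset.mem_product.mp p.2
        rw [Finset.mem_Icc] at h1 h2
        exact ⟨h1.1, h1.2.trans h2.1⟩⟩ *
    g ⟨(p.1.1, p.1.2, t.1.2.2), by
        obtain ⟨h1, h2⟩ := Finset.mem_product.mp p.2
        rw [Finset.mem_Icc] at h1 h2
        exact ⟨h1.2.trans h2.1, h2.2⟩⟩

variable {P}

/-- The standard basis element `e_t` of `I^3(P,R)`. -/
def e3 [DecidableEq P] (t0 : Flag3 P) : Flag3 P → R := fun t => if t = t0 then 1 else 0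

variable (P)

/-- The ideal `J^3_k(P,R)` of functions vanishing on flags `(x,y,z)` with `l(x,z) < k`. -/
def J3 (k : ℕ) : Submodule R (Flag3 P → R) where
  carrier := {f | ∀ t : Flag3 P, ell t.1.1 t.1.2.2 < (k : ℕ∞) → f t = 0}
  add_mem' := by
    intro f g hf hg t ht
    simp only [Pi.add_apply, hf t ht, hg t ht, add_zero]
  zero_mem' := by intro t _; rfl
  smul_mem' := by
    intro c f hf t ht
    simp only [Pi.smul_apply, hf t ht, smul_zero]

/-- The commutator submodule `[U,V]`. -/
def commSub (U V : Submodule R (Flag3 P → R)) : Submodule R (Flag3 P → R) :=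
  Submodule.span R {h | ∃ f ∈ U, ∃ g ∈ V, h = mul3 P R f g - mul3 P R g f}

end PreDefs

/-- The span of the idempotents `e_{xxy} + e_{xyy}` over the covering pairs `x < y`,
`l(x,y) = 1`. -/
def covPairSpan (P R : Type*) [PartialOrder P] [DecidableEq P] [CommRing R] :
    Submodule R (Flag3 P → R) :=
  Submodule.span R {h | ∃ x y : P, ∃ hxy : x < y, ell x y = 1 ∧
    h = e3 R (⟨(x, x, y), le_rfl, hxy.le⟩ : Flag3 P) +
        e3 R (⟨(x, y, y), hxy.le, le_rfl⟩ : Flag3 P)}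

section Length

variable {P : Type*} [PartialOrder P] {x z : P}

lemma le_ell_iff {n : ℕ∞} (hn : 1 ≤ n) :
    n ≤ ell x z ↔ n + 1 ≤ (Set.Icc x z).chainHeight (· < ·) := by
  by_cases hc : 1 ≤ (Set.Icc x z).chainHeight (· < ·)
  · exact (ENat.addLECancellable_of_ne_top ENat.one_ne_top).le_tsub_iff_right hc
  · have hc0 : (Set.Icc x z).chainHeight (· < ·) = 0 := Order.lt_one_iff.mp (not_le.mp hc)
    simp only [ell, hc0, zero_tsub, nonpos_iff_eq_zero]
    constructor
    · rintro rfl; simp at hn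
    · intro h; simp at h

lemma two_le_chainHeight_Icc_iff :
    2 ≤ (Set.Icc x z).chainHeight (· < ·) ↔ x < z := by
  constructor
  · intro h
    by_contra hxz
    have hsub : Set.Icc x z ⊆ {x} := fun b hb =>
      (lt_or_eq_of_le hb.1).elim (fun hxb => absurd (hxb.trans_le hb.2) hxz) (·.symm)
    have := h.trans ((Set.chainHeight_le_encard _ _).trans (Set.encard_le_encard hsub))
    simp at this
  · intro h
    have := Set.encard_le_chainHeight_of_isChain _ _ (Set.pair_subset (Set.left_mem_Icc.2 h.le)
      (Set.right_mem_Icc.2 h.le)) (IsChain.pair h)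
    rwa [Set.encard_pair h.ne] at this

lemma three_le_chainHeight_Icc_iff :
    3 ≤ (Set.Icc x z).chainHeight (· < ·) ↔ ∃ w, x < w ∧ w < z := by
  constructor
  · intro h
    by_contra! hw
    have hsub : Set.Icc x z ⊆ {x, z} := fun b hb => (lt_or_eq_of_le hb.1).elim
      (fun hxb => Or.inr ((lt_or_eq_of_le hb.2).resolve_left (hw b hxb))) (fun h => Or.inl h.symm)
    have := h.trans ((Set.chainHeight_le_encard _ _).trans
      ((Set.encard_le_encard hsub).trans (Set.encard_insert_le _ _)))
    norm_num at this
  · rintro ⟨w, hxw, hwz⟩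
    have hc : IsChain (· < ·) ({x, w, z} : Set P) := (IsChain.pair hwz).insert
      (by rintro b (rfl | rfl) - <;> simp only [hxw, hxw.trans hwz, true_or])
    have := Set.encard_le_chainHeight_of_isChain (Set.Icc x z) _ (by
      simp [Set.insert_subset_iff, hxw.le, hwz.le, (hxw.trans hwz).le]) hc
    rwa [Set.encard_eq_three.2 ⟨x, w, z, hxw.ne, (hxw.trans hwz).ne, hwz.ne, rfl⟩] at this

lemma one_le_ell_iff : 1 ≤ ell x z ↔ x < z := by
  rw [le_ell_iff le_rfl, one_add_one_eq_two, two_le_chainHeight_Icc_iff]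

lemma two_le_ell_iff : 2 ≤ ell x z ↔ ∃ w, x < w ∧ w < z := by
  rw [le_ell_iff one_le_two, two_add_one_eq_three, three_le_chainHeight_Icc_iff]

lemma ell_lt_one_iff (h : x ≤ z) : ell x z < 1 ↔ x = z := by
  rw [← not_le, one_le_ell_iff, h.lt_iff_ne, not_not]

lemma ell_eq_one_iff : ell x z = 1 ↔ x ⋖ z := by
  rw [le_antisymm_iff, ← ENat.lt_add_one_iff ENat.one_ne_top, one_add_one_eq_two, ← not_le,
    two_le_ell_iff, one_le_ell_iff, CovBy]
  simp only [not_exists, not_and]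
  exact and_comm

lemma ell_lt_two_iff (h : x ≤ z) : ell x z < 2 ↔ x = z ∨ x ⋖ z := by
  rw [← one_add_one_eq_two, ENat.lt_add_one_iff ENat.one_ne_top, le_iff_lt_or_eq,
    ell_lt_one_iff h, ell_eq_one_iff]

end Length

section Support

variable {P R : Type*} [PartialOrder P] [CommRing R] {f : Flag3 P → R}

lemma mem_J3_one_iff : f ∈ J3 P R 1 ↔ ∀ x : P, f ⟨(x, x, x), le_rfl, le_rfl⟩ = 0 := by
  refine ⟨fun hf x => hf _ (by rw [Nat.cast_one, ell_lt_one_iff le_rfl]), fun hf => ?_⟩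
  rintro ⟨⟨a, b, c⟩, hab, hbc⟩ ht
  obtain rfl : a = c := (ell_lt_one_iff (hab.trans hbc)).mp (by simpa using ht)
  obtain rfl : b = a := le_antisymm hbc hab
  exact hf b

lemma mem_J3_two_iff :
    f ∈ J3 P R 2 ↔ ∀ t : Flag3 P, t.1.1 = t.1.2.2 ∨ t.1.1 ⋖ t.1.2.2 → f t = 0 :=
  forall_congr' fun t => by rw [Nat.cast_ofNat, ell_lt_two_iff (t.2.1.trans t.2.2)]

-- Lets `mul3` be written as a sum over plain pairs, without membership proofs.
open Classical in
noncomputable def extendByZero (f : Flag3 P → R) (p : P × P × P) : R :=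
  if h : p.1 ≤ p.2.1 ∧ p.2.1 ≤ p.2.2 then f ⟨p, h⟩ else 0

lemma extendByZero_of_le (f : Flag3 P → R) {a b c : P} (hab : a ≤ b) (hbc : b ≤ c) :
    extendByZero f (a, b, c) = f ⟨(a, b, c), hab, hbc⟩ :=
  dif_pos ⟨hab, hbc⟩

lemma extendByZero_diag (hf : f ∈ J3 P R 1) (x : P) : extendByZero f (x, x, x) = 0 :=
  (extendByZero_of_le f le_rfl le_rfl).trans (mem_J3_one_iff.mp hf x)

lemma extendByZero_e3 [DecidableEq P] (s : Flag3 P) (q : P × P × P) :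
    extendByZero (e3 R s) q = if q = s.1 then 1 else 0 := by
  by_cases hq : q = s.1
  · subst hq
    simp [extendByZero, e3, s.2]
  · simp [extendByZero, e3, hq, Subtype.ext_iff]

end Support

lemma CovBy.finsetIcc_eq {P : Type*} [PartialOrder P] [LocallyFiniteOrder P] [DecidableEq P]
    {x z : P} (h : x ⋖ z) : Finset.Icc x z = {x, z} := by
  rw [← Finset.coe_inj, Finset.coe_Icc, Finset.coe_pair, h.Icc_eq]

section Products

variable {P R : Type*} [PartialOrder P] [LocallyFiniteOrder P] [CommRing R]
  {f g : Flag3 P → R} {x z : P}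

lemma mul3_apply (f g : Flag3 P → R) (t : Flag3 P) :
    mul3 P R f g t =
      ∑ p ∈ (Finset.Icc t.1.1 t.1.2.1 ×ˢ Finset.Icc t.1.2.1 t.1.2.2 : Finset (P × P)),
        extendByZero f (t.1.1, p) * extendByZero g (p.1, p.2, t.1.2.2) := by
  rw [mul3, ← Finset.sum_attach _ fun p : P × P =>
    extendByZero f (t.1.1, p) * extendByZero g (p.1, p.2, t.1.2.2)]
  refine Finset.sum_congr rfl fun p _ => ?_
  obtain ⟨h1, h2⟩ := Finset.mem_product.mp p.2
  rw [Finset.mem_Icc] at h1 h2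
  rw [extendByZero_of_le f h1.1 (h1.2.trans h2.1), extendByZero_of_le g (h1.2.trans h2.1) h2.2]

lemma mul3_apply_diag (hf : f ∈ J3 P R 1) (x : P) :
    mul3 P R f g ⟨(x, x, x), le_rfl, le_rfl⟩ = 0 := by
  simp [mul3_apply, extendByZero_diag hf]

lemma mul3_apply_left_of_covBy [DecidableEq P] (hf : f ∈ J3 P R 1) (h : x ⋖ z) :
    mul3 P R f g ⟨(x, x, z), le_rfl, h.le⟩ =
      f ⟨(x, x, z), le_rfl, h.le⟩ * g ⟨(x, z, z), h.le, le_rfl⟩ := by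
  simp [mul3_apply, h.finsetIcc_eq, extendByZero_diag hf, extendByZero_of_le, h.le]

lemma mul3_apply_right_of_covBy [DecidableEq P] (hg : g ∈ J3 P R 1) (h : x ⋖ z) :
    mul3 P R f g ⟨(x, z, z), h.le, le_rfl⟩ =
      f ⟨(x, x, z), le_rfl, h.le⟩ * g ⟨(x, z, z), h.le, le_rfl⟩ := by
  rw [mul3_apply, Finset.sum_product, h.finsetIcc_eq, Finset.sum_pair h.ne]
  simp [extendByZero_diag hg, extendByZero_of_le, h.le]

end Products

lemma commSub_le_span_mul3 {P R : Type*} [PartialOrder P] [LocallyFiniteOrder P] [CommRing R]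
    (U : Submodule R (Flag3 P → R)) :
    commSub P R U U ≤ Submodule.span R {h | ∃ f ∈ U, ∃ g ∈ U, h = mul3 P R f g} := by
  rw [commSub, Submodule.span_le]
  rintro _ ⟨f, hf, g, hg, rfl⟩
  exact sub_mem (Submodule.subset_span ⟨f, hf, g, hg, rfl⟩)
    (Submodule.subset_span ⟨g, hg, f, hf, rfl⟩)

def coverBalanced (P R : Type*) [PartialOrder P] [CommRing R] : Submodule R (Flag3 P → R) where
  carrier := {f | ∀ ⦃x z : P⦄ (h : x ⋖ z),
    f ⟨(x, x, z), le_rfl, h.le⟩ = f ⟨(x, z, z), h.le, le_rfl⟩}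
  add_mem' hf hg _ _ h := by simp only [Pi.add_apply, hf h, hg h]
  zero_mem' _ _ _ := rfl
  smul_mem' _ _ hf _ _ h := by simp only [Pi.smul_apply, hf h]

section Elementary

variable {P R : Type*} [PartialOrder P] [DecidableEq P] [CommRing R] {x y z u v : P}

-- `e3` indexed by a bare triple, so that families such as `b ↦ e_{xbz}` need no order proofs.
def single3 (R : Type*) [CommRing R] (p : P × P × P) : Flag3 P → R :=
  fun t => if t.1 = p then 1 else 0

lemma e3_eq_single3 (s : Flag3 P) : e3 R s = single3 R s.1 := by
  ext t
  simp [e3, single3, Subtype.ext_iff]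

lemma single3_add_single3_apply_of_covBy (h : x ⋖ z) (s : Flag3 P) :
    (single3 R (x, x, z) + single3 R (x, z, z)) s =
      if (s.1.1, s.1.2.2) = (x, z) then 1 else 0 := by
  obtain ⟨⟨a, b, c⟩, hab, hbc⟩ := s
  dsimp only at hab hbc
  simp only [Pi.add_apply, single3, Prod.mk.injEq]
  rcases eq_or_ne a x with rfl | ha
  · rcases eq_or_ne c z with rfl | hc
    · rcases h.eq_or_eq hab hbc with rfl | rfl <;> simp [h.ne, h.ne']
    · simp [hc]
  · simp [ha]

lemma e3_mem_J3_one {t : Flag3 P} (ht : t.1.1 ≠ t.1.2.2) : e3 R t ∈ J3 P R 1 :=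
  mem_J3_one_iff.mpr fun x => if_neg fun h => ht (by rw [← h])

variable [LocallyFiniteOrder P]

lemma mul3_e3_e3 (hxu : x ≤ u) (huv : u ≤ v) (hvz : v ≤ z) :
    mul3 P R (e3 R ⟨(x, u, v), hxu, huv⟩) (e3 R ⟨(u, v, z), huv, hvz⟩) =
      ∑ b ∈ Finset.Icc u v, single3 R (x, b, z) := by
  ext ⟨⟨a, b, c⟩, hab, hbc⟩
  simp only [mul3_apply, extendByZero_e3, Finset.sum_apply, single3, ite_zero_mul_ite_zero, one_mul]
  have hl : ∀ p ∈ Finset.Icc a b ×ˢ Finset.Icc b c,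
      (if (a, p) = (x, u, v) ∧ (p.1, p.2, c) = (u, v, z) then (1 : R) else 0) =
        if (u, v) = p then if a = x ∧ c = z then 1 else 0 else 0 := by
    intro p _
    grind
  have hr : ∀ b' ∈ Finset.Icc u v,
      (if (a, b, c) = (x, b', z) then (1 : R) else 0) =
        if b = b' then if a = x ∧ c = z then 1 else 0 else 0 := by
    intro b' _
    grind
  rw [Finset.sum_congr rfl hl, Finset.sum_congr rfl hr, Finset.sum_ite_eq, Finset.sum_ite_eq]
  grind

lemma mul3_e3_e3_eq_zero (hxu : x ≤ u) (huv : u ≤ v) (hvz : v ≤ z) (hxz : x ≠ z) :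
    mul3 P R (e3 R ⟨(u, v, z), huv, hvz⟩) (e3 R ⟨(x, u, v), hxu, huv⟩) = 0 := by
  ext r
  simp only [mul3_apply, extendByZero_e3, Pi.zero_apply]
  refine Finset.sum_eq_zero fun p _ => ?_
  grind

lemma sum_single3_mem_commSub (hxu : x ≤ u) (huv : u ≤ v) (hvz : v ≤ z) (hxv : x < v)
    (huz : u < z) :
    ∑ b ∈ Finset.Icc u v, single3 R (x, b, z) ∈ commSub P R (J3 P R 1) (J3 P R 1) :=
  Submodule.subset_span ⟨_, e3_mem_J3_one hxv.ne, _, e3_mem_J3_one huz.ne, by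
    rw [mul3_e3_e3 hxu huv hvz, mul3_e3_e3_eq_zero hxu huv hvz (hxu.trans_lt huz).ne, sub_zero]⟩

lemma single3_mem_commSub_of_lt_of_lt (hxy : x < y) (hyz : y < z) :
    single3 R (x, y, z) ∈ commSub P R (J3 P R 1) (J3 P R 1) := by
  simpa using sum_single3_mem_commSub hxy.le le_rfl hyz.le hxy hyz

lemma single3_mem_commSub (hxy : x ≤ y) (hyz : y ≤ z) (h : 2 ≤ ell x z) :
    single3 R (x, y, z) ∈ commSub P R (J3 P R 1) (J3 P R 1) := by
  obtain ⟨w, hxw, hwz⟩ := two_le_ell_iff.mp h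
  rcases hxy.eq_or_lt with rfl | hxy
  · have := sum_single3_mem_commSub le_rfl hxw.le hwz.le hxw (hxw.trans hwz) (R := R)
    rw [Finset.Icc_eq_cons_Ioc hxw.le, Finset.sum_cons] at this
    refine (Submodule.add_mem_iff_left _ (Submodule.sum_mem _ fun b hb => ?_)).mp this
    rw [Finset.mem_Ioc] at hb
    exact single3_mem_commSub_of_lt_of_lt hb.1 (hb.2.trans_lt hwz)
  rcases hyz.eq_or_lt with rfl | hyz
  · have := sum_single3_mem_commSub hxw.le hwz.le le_rfl (hxw.trans hwz) hwz (R := R)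
    rw [Finset.Icc_eq_cons_Ico hwz.le, Finset.sum_cons] at this
    refine (Submodule.add_mem_iff_left _ (Submodule.sum_mem _ fun b hb => ?_)).mp this
    rw [Finset.mem_Ico] at hb
    exact single3_mem_commSub_of_lt_of_lt (hxw.trans_le hb.1) hb.2
  exact single3_mem_commSub_of_lt_of_lt hxy hyz

end Elementary

section Decomposition

variable {P R : Type*} [PartialOrder P] [DecidableEq P] [CommRing R]

open Classical in
lemma sum_covBy_smul_apply [Fintype P] (c : P × P → R) (s : Flag3 P) :
    (∑ p ∈ ({p | p.1 ⋖ p.2} : Finset (P × P)),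
        c p • (single3 R (p.1, p.1, p.2) + single3 R (p.1, p.2, p.2))) s =
      if s.1.1 ⋖ s.1.2.2 then c (s.1.1, s.1.2.2) else 0 := by
  rw [Finset.sum_apply, Finset.sum_congr rfl fun p hp => by
    rw [Pi.smul_apply, single3_add_single3_apply_of_covBy (Finset.mem_filter.mp hp).2]]
  simp

lemma covPairSpan_apply_eq_zero {f : Flag3 P → R} (hf : f ∈ covPairSpan P R) {t : Flag3 P}
    (ht : ¬t.1.1 ⋖ t.1.2.2) : f t = 0 := by
  induction hf using Submodule.span_induction with
  | mem _ hh =>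
    obtain ⟨x, z, -, hell, rfl⟩ := hh
    rw [e3_eq_single3, e3_eq_single3, single3_add_single3_apply_of_covBy (ell_eq_one_iff.mp hell),
      if_neg fun he => ht ?_]
    rw [Prod.mk.injEq] at he
    rw [he.1, he.2]
    exact ell_eq_one_iff.mp hell
  | zero => rfl
  | add _ _ _ _ hf hg => simp [hf, hg]
  | smul _ _ _ hf => simp [hf]

lemma disjoint_covPairSpan_J3_two : Disjoint (covPairSpan P R) (J3 P R 2) := by
  refine Submodule.disjoint_def.mpr fun f hf hf2 => funext fun t => ?_
  by_cases ht : t.1.1 ⋖ t.1.2.2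
  · exact mem_J3_two_iff.mp hf2 t (Or.inr ht)
  · exact covPairSpan_apply_eq_zero hf ht

lemma inf_coverBalanced_le [Fintype P] :
    J3 P R 1 ⊓ coverBalanced P R ≤ covPairSpan P R ⊔ J3 P R 2 := by
  classical
  rintro f ⟨hf1, hf2⟩
  set c : P × P → R := fun p => extendByZero f (p.1, p.1, p.2)
  set g := ∑ p ∈ ({p | p.1 ⋖ p.2} : Finset (P × P)),
    c p • (single3 R (p.1, p.1, p.2) + single3 R (p.1, p.2, p.2)) with hg_def
  have hg : g ∈ covPairSpan P R := by
    refine Submodule.sum_mem _ fun p hp => Submodule.smul_mem _ _ (Submodule.subset_span ?_)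
    have h := (Finset.mem_filter.mp hp).2
    exact ⟨p.1, p.2, h.lt, ell_eq_one_iff.mpr h, by rw [e3_eq_single3, e3_eq_single3]⟩
  have hfg : f - g ∈ J3 P R 2 := by
    refine mem_J3_two_iff.mpr fun t ht => ?_
    rw [Pi.sub_apply, sub_eq_zero, hg_def, sum_covBy_smul_apply]
    obtain ⟨⟨x, y, z⟩, hxy, hyz⟩ := t
    dsimp only at ht hxy hyz ⊢
    rcases ht with rfl | h
    · obtain rfl := le_antisymm hyz hxy
      rw [if_neg (lt_irrefl y ∘ CovBy.lt)]
      exact mem_J3_one_iff.mp hf1 y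
    · rw [if_pos h, show c (x, z) = _ from extendByZero_of_le f le_rfl h.le]
      rcases h.eq_or_eq hxy hyz with rfl | rfl
      · rfl
      · exact (hf2 h).symm
  simpa using Submodule.add_mem_sup hg hfg

variable [LocallyFiniteOrder P]

lemma span_mul3_le :
    Submodule.span R {h | ∃ f ∈ J3 P R 1, ∃ g ∈ J3 P R 1, h = mul3 P R f g} ≤
      J3 P R 1 ⊓ coverBalanced P R := by
  rw [Submodule.span_le]
  rintro _ ⟨f, hf, g, hg, rfl⟩
  exact ⟨mem_J3_one_iff.mpr (mul3_apply_diag hf), fun x z h => by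
    rw [mul3_apply_left_of_covBy hf h, mul3_apply_right_of_covBy hg h]⟩

lemma covPairSpan_le_commSub : covPairSpan P R ≤ commSub P R (J3 P R 1) (J3 P R 1) := by
  rw [covPairSpan, Submodule.span_le]
  rintro _ ⟨x, z, -, hell, rfl⟩
  have h := ell_eq_one_iff.mp hell
  simpa [e3_eq_single3, h.finsetIcc_eq, Finset.sum_pair h.ne] using
    sum_single3_mem_commSub le_rfl h.le le_rfl h.lt h.lt (R := R)

lemma J3_two_le_commSub [Fintype P] : J3 P R 2 ≤ commSub P R (J3 P R 1) (J3 P R 1) := by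
  classical
  intro f hf
  rw [pi_eq_sum_univ f]
  refine Submodule.sum_mem _ fun t _ => ?_
  by_cases h : 2 ≤ ell t.1.1 t.1.2.2
  · have ht : (fun s => if t = s then (1 : R) else 0) = single3 R t.1 := by
      ext s
      simp [single3, Subtype.ext_iff, eq_comm]
    rw [ht]
    exact Submodule.smul_mem _ _ (single3_mem_commSub t.2.1 t.2.2 h)
  · rw [hf t (by rw [Nat.cast_ofNat]; exact not_le.mp h), zero_smul]
    exact Submodule.zero_mem _

end Decomposition

/-- `Z^3_2(P,R) = [J^3_1, J^3_1]` equals `J^3_1 ⬝ J^3_1`, and equals the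
internal direct sum of `span_R{e_{xxy} + e_{xyy} : l(x,y) = 1}` and `J^3_2(P,R)`;
in particular it is closed under multiplication. -/
theorem Z3_two_description
    {P R : Type*} [PartialOrder P] [Fintype P] [DecidableEq P] [LocallyFiniteOrder P]
    [CommRing R] :
    commSub P R (J3 P R 1) (J3 P R 1) =
        Submodule.span R
          {h : Flag3 P → R | ∃ f ∈ J3 P R 1, ∃ g ∈ J3 P R 1, h = mul3 P R f g} ∧
    commSub P R (J3 P R 1) (J3 P R 1) = covPairSpan P R ⊔ J3 P R 2 ∧
    Disjoint (covPairSpan P R) (J3 P R 2) ∧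
    (∀ f g : Flag3 P → R, f ∈ commSub P R (J3 P R 1) (J3 P R 1) →
      g ∈ commSub P R (J3 P R 1) (J3 P R 1) →
      mul3 P R f g ∈ commSub P R (J3 P R 1) (J3 P R 1)) := by
  have hZM := commSub_le_span_mul3 (J3 P R 1)
  have hMW := span_mul3_le (P := P) (R := R)
  have hWS := inf_coverBalanced_le (P := P) (R := R)
  have hSZ := sup_le (covPairSpan_le_commSub (R := R)) (J3_two_le_commSub (P := P))
  have hZ := le_antisymm hZM (hMW.trans (hWS.trans hSZ))
  refine ⟨hZ, le_antisymm (hZM.trans (hMW.trans hWS)) hSZ, disjoint_covPairSpan_J3_two,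
    fun f g hf hg => ?_⟩
  have hJ : commSub P R (J3 P R 1) (J3 P R 1) ≤ J3 P R 1 := hZM.trans (hMW.trans inf_le_left)
  rw [hZ]
  exact Submodule.subset_span ⟨f, hJ hf, g, hJ hg, rfl⟩
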